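/- arXiv:2206.07872 — 8 statements merged into one kernel-verified Lean document; each statement's English description precedes it below -/
import Mathlib

section
/- Every 2-edge-connected subgraph of a minimally 2-edge-connected graph is itself minimally 2-edge-connected. -/
open SimpleGraph

open scoped Classical in
noncomputable def adjMat {V : Type} [Fintype V] (G : SimpleGraph V) : Matrix V V ℝ :=
  Matrix.of fun i j => if G.Adj i j then (1 : ℝ) else 0

noncomputable def specRad {V : Type} [Fintype V] [DecidableEq V] (G : SimpleGraph V) : ℝ :=
  sSup (spectrum ℝ (adjMat G))

def TwoEdgeConnected {V : Type} (G : SimpleGraph V) : Prop :=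
  G.Connected ∧ G.edgeSet.Nonempty ∧ ∀ e ∈ G.edgeSet, (G.deleteEdges {e}).Connected

def MinTwoEdgeConnected {V : Type} (G : SimpleGraph V) : Prop :=
  TwoEdgeConnected G ∧ ∀ e ∈ G.edgeSet, ¬ TwoEdgeConnected (G.deleteEdges {e})

def TwoConnected {V : Type} (G : SimpleGraph V) : Prop :=
  3 ≤ Nat.card V ∧ ∀ v : V, ((⊤ : G.Subgraph).deleteVerts {v}).coe.Connected

def MinTwoConnected {V : Type} (G : SimpleGraph V) : Prop :=
  TwoConnected G ∧ ∀ e ∈ G.edgeSet, ¬ TwoConnected (G.deleteEdges {e})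

def HasChord {V : Type} (G : SimpleGraph V) {v : V} (c : G.Walk v v) : Prop :=
  ∃ a b, G.Adj a b ∧ a ∈ c.support ∧ b ∈ c.support ∧ s(a, b) ∉ c.edges

/-- `K_{2,t}` with one edge subdivided: `Sum.inl 0, Sum.inl 1` are the two vertices of the
small part, `Sum.inl 2` is the subdivision vertex, `Sum.inr i` the large part. -/
def SK2 (t : ℕ) : SimpleGraph (Fin 3 ⊕ Fin t) :=
  SimpleGraph.fromRel (fun x y =>
    (x = Sum.inl 0 ∧ y = Sum.inl 2) ∨
    (∃ i : Fin t, x = Sum.inl 2 ∧ y = Sum.inr i ∧ i.val = 0) ∨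
    (∃ i : Fin t, x = Sum.inl 1 ∧ y = Sum.inr i) ∨
    (∃ i : Fin t, x = Sum.inl 0 ∧ y = Sum.inr i ∧ i.val ≠ 0))

/-- `K_{2,s} * K₃`: `inl 0, inl 1` the small part of `K_{2,s}`, a triangle on
`inl 0, inl 2, inl 3`, and `inr i` the large part. -/
def K2sK3 (t : ℕ) : SimpleGraph (Fin 4 ⊕ Fin t) :=
  SimpleGraph.fromRel (fun x y =>
    (x = Sum.inl 0 ∧ y = Sum.inl 2) ∨ (x = Sum.inl 0 ∧ y = Sum.inl 3) ∨
    (x = Sum.inl 2 ∧ y = Sum.inl 3) ∨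
    (∃ i : Fin t, (x = Sum.inl 0 ∨ x = Sum.inl 1) ∧ y = Sum.inr i))

/-- The friendship graph `F_t`: vertex `0` is the common center, the `i`-th triangle is
`{0, 2i+1, 2i+2}`. -/
def friendship (t : ℕ) : SimpleGraph (Fin (2 * t + 1)) :=
  SimpleGraph.fromRel (fun x y =>
    x = 0 ∨ (∃ i : Fin t, (x : ℕ) = 2 * i + 1 ∧ (y : ℕ) = 2 * i + 2))

/-- Disjoint union of two simple graphs. -/
def disjUnion {α β : Type} (G : SimpleGraph α) (H : SimpleGraph β) : SimpleGraph (α ⊕ β) :=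
  SimpleGraph.fromRel (fun x y =>
    (∃ a b, x = Sum.inl a ∧ y = Sum.inl b ∧ G.Adj a b) ∨
    (∃ a b, x = Sum.inr a ∧ y = Sum.inr b ∧ H.Adj a b))

/-- Identifying `v ∈ H` with `w ∈ K` in the disjoint union of `H` and `K`. -/
def wedge {α β : Type} (H : SimpleGraph α) (K : SimpleGraph β) (v : α) (w : β) :
    SimpleGraph (α ⊕ {b : β // b ≠ w}) :=
  SimpleGraph.fromRel (fun x y =>
    (∃ a b, x = Sum.inl a ∧ y = Sum.inl b ∧ H.Adj a b) ∨
    (∃ a b, x = Sum.inr a ∧ y = Sum.inr b ∧ K.Adj a.1 b.1) ∨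
    (∃ b, x = Sum.inl v ∧ y = Sum.inr b ∧ K.Adj w b.1))

def IsStarCenter {V : Type} (G : SimpleGraph V) (v : V) : Prop :=
  (∀ w, w ≠ v → G.Adj v w) ∧ ∀ a b, G.Adj a b → a = v ∨ b = v

/-!
If `H - e` were 2-edge-connected for an edge `e` of `H`, then so would be `G - e`, against the
minimality of `G`. Indeed, let `f` be another edge of `G`. If `f` lies in `H`, its ends are joined
in `H - e - f ⊆ G - e - f`, so `f` is not a bridge of the connected graph `G - e`. Otherwise the
ends of `e` are joined in `H - e ⊆ G - e - f`, so `e` is not a bridge of the connected graph `G - f`.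
-/

namespace SimpleGraph

variable {V : Type} {G : SimpleGraph V}

lemma Connected.connected_deleteEdges_union_of_reachable {s : Set (Sym2 V)} {x y : V}
    (h : (G.deleteEdges s).Connected) (hxy : (G.deleteEdges (s ∪ {s(x, y)})).Reachable x y) :
    (G.deleteEdges (s ∪ {s(x, y)})).Connected := by
  rw [← deleteEdges_deleteEdges] at hxy ⊢
  exact h.connected_delete_edge_of_not_isBridge (not_not_intro hxy)

def Subgraph.homDeleteEdges (H : G.Subgraph) {s : Set (Sym2 V)} {t : Set (Sym2 H.verts)}
    (hst : ∀ ⦃u w : H.verts⦄, H.Adj u w → s(u.1, w.1) ∈ s → s(u, w) ∈ t) :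
    H.coe.deleteEdges t →g G.deleteEdges s where
  toFun := Subtype.val
  map_rel' {u w} huw := by
    rw [SimpleGraph.deleteEdges_adj] at huw ⊢
    exact ⟨H.adj_sub huw.1, fun h ↦ huw.2 (hst huw.1 h)⟩

end SimpleGraph

open SimpleGraph in
theorem TwoEdgeConnected.deleteEdges_of_subgraph {V : Type} {G : SimpleGraph V}
    {H : G.Subgraph} (hG : TwoEdgeConnected G) {a b : H.verts} (hab : H.Adj a b)
    (hK : TwoEdgeConnected (H.coe.deleteEdges {s(a, b)})) :
    TwoEdgeConnected (G.deleteEdges {s(a.1, b.1)}) := by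
  have hGab : (G.deleteEdges {s(a.1, b.1)}).Connected := hG.2.2 _ (H.adj_sub hab)
  refine ⟨hGab, ?_, Sym2.ind fun p q hpq ↦ ?_⟩
  · obtain ⟨g, hg⟩ := hK.2.1
    exact ⟨_, (H.homDeleteEdges (by simp [Subtype.ext_iff])).map_mem_edgeSet hg⟩
  rw [deleteEdges_deleteEdges]
  by_cases hpqH : H.Adj p q
  · have hp : p ∈ H.verts := H.edge_vert hpqH
    have hq : q ∈ H.verts := H.edge_vert hpqH.symm
    have hpqK : s(⟨p, hp⟩, ⟨q, hq⟩) ∈ (H.coe.deleteEdges {s(a, b)}).edgeSet := by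
      simp_all [Subtype.ext_iff]
    have hreach := (hK.2.2 _ hpqK).preconnected ⟨p, hp⟩ ⟨q, hq⟩
    rw [deleteEdges_deleteEdges] at hreach
    exact hGab.connected_deleteEdges_union_of_reachable
      (hreach.map (H.homDeleteEdges (by simp [Subtype.ext_iff])))
  · have hreach : (G.deleteEdges ({s(p, q)} ∪ {s(a.1, b.1)})).Reachable a b :=
      (hK.1.preconnected a b).map
        (H.homDeleteEdges (by simp [Subtype.ext_iff]; grind [H.adj_symm]))
    rw [Set.union_comm]
    exact (hG.2.2 _ hpq.1).connected_deleteEdges_union_of_reachable hreach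

theorem stmt0 {V : Type} (G : SimpleGraph V) (H : G.Subgraph)
    (hG : MinTwoEdgeConnected G) (hH : TwoEdgeConnected H.coe) :
    MinTwoEdgeConnected H.coe :=
  ⟨hH, Sym2.ind fun _ _ hab hK ↦ hG.2 _ (H.adj_sub hab) (hG.1.deleteEdges_of_subgraph hab hK)⟩
end

section
/- If G is a minimally 2-edge-connected graph, then no cycle of G has a chord. -/
open SimpleGraph

/-!
If `ab` is a chord of a cycle `C`, the two arcs of `C` between `a` and `b` avoid `ab` and share no
edge, so for every edge `f` one of them joins `a` and `b` in `G - f - ab`. Hence `ab` is a bridge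
neither of `G` nor of any `G - f`, and `G - ab` is still 2-edge-connected.
-/

namespace SimpleGraph

variable {V : Type} {G : SimpleGraph V}

lemma Walk.IsTrail.exists_walk_subset_edges_notMem [DecidableEq V] {v a b : V} {c : G.Walk v v}
    (hc : c.IsTrail) (ha : a ∈ c.support) (hb : b ∈ c.support) (f : Sym2 V) :
    ∃ q : G.Walk a b, q.edges ⊆ c.edges ∧ f ∉ q.edges := by
  set c' := c.rotate a ha
  have hb' : b ∈ c'.support := (c.mem_support_rotate_iff a ha).mpr hb
  have hc'c : c'.edges ⊆ c.edges := fun e he => (c.rotate_edges a ha).mem_iff.mp he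
  have hsplit : (c'.takeUntil b hb').edges ++ (c'.dropUntil b hb').edges = c'.edges := by
    rw [← Walk.edges_append, Walk.take_spec]
  by_cases hf : f ∈ (c'.takeUntil b hb').edges
  · have hnodup := hsplit ▸ (hc.rotate ha).edges_nodup
    refine ⟨(c'.dropUntil b hb').reverse, ?_, ?_⟩ <;> rw [Walk.edges_reverse]
    · exact fun e he => hc'c (Walk.edges_dropUntil_subset_edges _ _ (List.mem_reverse.mp he))
    · exact fun hf' => List.disjoint_of_nodup_append hnodup hf (List.mem_reverse.mp hf')
  · exact ⟨c'.takeUntil b hb', fun e he => hc'c (Walk.edges_takeUntil_subset_edges _ _ he), hf⟩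

lemma TwoEdgeConnected.deleteEdges_of_forall_exists_walk {u v : V} (hG : TwoEdgeConnected G)
    (huv : u ≠ v) (h : ∀ f : Sym2 V, ∃ q : G.Walk u v, s(u, v) ∉ q.edges ∧ f ∉ q.edges) :
    TwoEdgeConnected (G.deleteEdges {s(u, v)}) := by
  obtain ⟨hconn, -, hdel⟩ := hG
  obtain ⟨q, hqe, -⟩ := h s(u, v)
  refine ⟨?_, ?_, fun f hf => ?_⟩
  · refine hconn.connected_delete_edge_of_not_isBridge ?_
    rw [isBridge_iff_forall_walk_mem_edges]
    exact fun hall => hqe (hall q)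
  · have hq : ¬ q.Nil := Walk.not_nil_of_ne huv
    have hmem := Walk.mk_start_snd_mem_edges hq
    refine ⟨s(u, q.snd), ?_⟩
    rw [edgeSet_deleteEdges]
    exact ⟨q.edges_subset_edgeSet hmem, fun he => hqe (he ▸ hmem)⟩
  · rw [edgeSet_deleteEdges] at hf
    rw [deleteEdges_deleteEdges, Set.union_comm, ← deleteEdges_deleteEdges]
    refine (hdel f hf.1).connected_delete_edge_of_not_isBridge ?_
    obtain ⟨p, hpe, hpf⟩ := h f
    rw [isBridge_iff, not_not, reachable_deleteEdges_iff_exists_walk]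
    exact ⟨p.toDeleteEdge f hpf, by rwa [Walk.edges_transfer]⟩

end SimpleGraph

theorem stmt1 {V : Type} (G : SimpleGraph V) (hG : MinTwoEdgeConnected G)
    {v : V} (c : G.Walk v v) (hc : c.IsCycle) : ¬ HasChord G c := by
  classical
  rintro ⟨a, b, hab, ha, hb, hchord⟩
  refine hG.2 s(a, b) hab (hG.1.deleteEdges_of_forall_exists_walk hab.ne fun f => ?_)
  obtain ⟨q, hqc, hqf⟩ := hc.isTrail.exists_walk_subset_edges_notMem ha hb f
  exact ⟨q, fun he => hchord (hqc he), hqf⟩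
end

section
/- A minimally 2-connected graph with more than three vertices contains no triangle. -/
open SimpleGraph

/-!
Let `abc` be a triangle. Minimality at the edge `ab` forces `c` to separate `a` from `b` in
`G - ab`: otherwise, for every vertex `v`, a walk of `G - v` could be rerouted around `ab`
(through `c` if `v ≠ c`), and `G - ab` would still be 2-connected.

Now take a fourth vertex `w`. For each triangle vertex `t`, a walk from `w` to the triangle in
`G - t`, cut at its first triangle vertex, reaches a triangle vertex other than `t`. Hence `w`
reaches two distinct triangle vertices `a`, `b` by walks meeting the triangle only at their
ends; joined at `w` they form an `a`–`b` walk avoiding both `c` and the edge `ab`.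
-/

namespace SimpleGraph

variable {V : Type} {G : SimpleGraph V}

def ReachableAvoiding (G : SimpleGraph V) (v u w : V) : Prop :=
  ∃ p : G.Walk u w, v ∉ p.support

namespace ReachableAvoiding

variable {v u w x y : V}

theorem refl (h : u ≠ v) : G.ReachableAvoiding v u u :=
  ⟨Walk.nil, by simpa using h.symm⟩

theorem symm (h : G.ReachableAvoiding v u w) : G.ReachableAvoiding v w u := by
  obtain ⟨p, hp⟩ := h
  exact ⟨p.reverse, by simpa using hp⟩

theorem trans (h : G.ReachableAvoiding v u w) (h' : G.ReachableAvoiding v w x) :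
    G.ReachableAvoiding v u x := by
  obtain ⟨p, hp⟩ := h
  obtain ⟨q, hq⟩ := h'
  refine ⟨p.append q, ?_⟩
  rw [Walk.mem_support_append_iff]
  exact not_or.2 ⟨hp, hq⟩

theorem of_adj (h : G.Adj u w) (hu : u ≠ v) (hw : w ≠ v) : G.ReachableAvoiding v u w :=
  ⟨h.toWalk, by simp [hu.symm, hw.symm]⟩

theorem deleteEdges
    (hxy : x ≠ v → y ≠ v → (G.deleteEdges {s(x, y)}).ReachableAvoiding v x y)
    (h : G.ReachableAvoiding v u w) : (G.deleteEdges {s(x, y)}).ReachableAvoiding v u w := by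
  obtain ⟨p, hp⟩ := h
  induction p with
  | nil => exact refl fun h => hp (by simp [h])
  | @cons a b c hab p ih =>
    rw [Walk.support_cons, List.mem_cons, not_or] at hp
    have hb : b ≠ v := fun h => hp.2 (h ▸ p.start_mem_support)
    refine ReachableAvoiding.trans ?_ (ih hp.2)
    by_cases he : s(a, b) = s(x, y)
    · rcases Sym2.eq_iff.1 he with ⟨rfl, rfl⟩ | ⟨rfl, rfl⟩
      · exact hxy (Ne.symm hp.1) hb
      · exact (hxy hb (Ne.symm hp.1)).symm
    · exact of_adj (deleteEdges_adj.2 ⟨hab, he⟩) (Ne.symm hp.1) hb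

end ReachableAvoiding

theorem reachable_deleteVerts_iff {v u w : V} (hu : u ≠ v) (hw : w ≠ v) :
    ((⊤ : G.Subgraph).deleteVerts {v}).coe.Reachable ⟨u, by simpa⟩ ⟨w, by simpa⟩ ↔
      G.ReachableAvoiding v u w := by
  constructor
  · rintro ⟨p⟩
    refine ⟨p.map (Subgraph.hom _), ?_⟩
    show v ∉ (p.map (Subgraph.hom _)).support
    rw [Walk.support_map, List.mem_map]
    rintro ⟨a, -, ha⟩
    simpa [← ha] using a.2
  · rintro ⟨p, hp⟩
    induction p with
    | nil => rfl
    | @cons a b c hab p ih =>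
      rw [Walk.support_cons, List.mem_cons, not_or] at hp
      have hb : b ≠ v := fun h => hp.2 (h ▸ p.start_mem_support)
      refine Reachable.trans (Adj.reachable ?_) (ih hb hw hp.2)
      simpa [hu, hb] using hab

theorem Walk.exists_walk_to_first_mem {S : Set V} {u t : V} (p : G.Walk u t) (ht : t ∈ S) :
    ∃ a ∈ p.support, a ∈ S ∧ ∃ q : G.Walk u a, ∀ b ∈ q.support, b ∈ S → b = a := by
  induction p with
  | nil => exact ⟨_, Walk.start_mem_support _, ht, Walk.nil, by simp⟩
  | @cons u b c hub p ih =>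
    by_cases hu : u ∈ S
    · exact ⟨u, Walk.start_mem_support _, hu, Walk.nil, by simp⟩
    obtain ⟨a, hap, haS, q, hq⟩ := ih ht
    refine ⟨a, List.mem_cons_of_mem _ hap, haS, Walk.cons hub q, ?_⟩
    rintro v (_ | ⟨_, hv⟩) hvS
    exacts [absurd hvS hu, hq v hv hvS]

theorem exists_walk_avoiding_of_walks_to_first_mem {S : Set V} {w a b c : V}
    (ha : a ∈ S) (hb : b ∈ S) (hab : a ≠ b) (hc : c ∈ S) (hca : c ≠ a) (hcb : c ≠ b)
    (qa : G.Walk w a) (hqa : ∀ v ∈ qa.support, v ∈ S → v = a)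
    (qb : G.Walk w b) (hqb : ∀ v ∈ qb.support, v ∈ S → v = b) :
    ∃ p : G.Walk a b, c ∉ p.support ∧ s(a, b) ∉ p.edges := by
  refine ⟨qa.reverse.append qb, ?_, ?_⟩
  · rw [Walk.mem_support_append_iff, Walk.support_reverse, List.mem_reverse]
    rintro (h | h)
    exacts [hca (hqa c h hc), hcb (hqb c h hc)]
  · rw [Walk.edges_append, Walk.edges_reverse, List.mem_append, List.mem_reverse]
    rintro (h | h)
    · exact hab (hqa b (qa.snd_mem_support_of_mem_edges h) hb).symm
    · exact hab (hqb a (qb.fst_mem_support_of_mem_edges h) ha)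

end SimpleGraph

section TwoConnected

open SimpleGraph

variable {V : Type} {G : SimpleGraph V}

theorem twoConnected_iff :
    TwoConnected G ↔ 3 ≤ Nat.card V ∧
      ∀ v u w : V, u ≠ v → w ≠ v → G.ReachableAvoiding v u w := by
  refine and_congr_right fun hcard => forall_congr' fun v => ?_
  rw [connected_iff]
  constructor
  · intro h u w hu hw
    exact (reachable_deleteVerts_iff hu hw).1 (h.1 _ _)
  · intro h
    have : Nontrivial V := by
      have := Nat.finite_of_card_ne_zero (α := V) (by omega)
      exact Finite.one_lt_card_iff_nontrivial.1 (by omega)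
    obtain ⟨u, hu⟩ := exists_ne v
    refine ⟨fun ⟨a, ha⟩ ⟨b, hb⟩ => ?_, ⟨u, by simpa⟩⟩
    simp only [Subgraph.deleteVerts_verts, Subgraph.verts_top, Set.mem_sdiff, Set.mem_univ,
      Set.mem_singleton_iff, true_and] at ha hb
    exact (reachable_deleteVerts_iff ha hb).2 (h a b ha hb)

theorem TwoConnected.deleteEdges_of_reachableAvoiding {x y z : V} (hG : TwoConnected G)
    (hxz : G.Adj x z) (hyz : G.Adj y z)
    (h : (G.deleteEdges {s(x, y)}).ReachableAvoiding z x y) :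
    TwoConnected (G.deleteEdges {s(x, y)}) := by
  rw [twoConnected_iff] at hG ⊢
  refine ⟨hG.1, fun v u w hu hw => (hG.2 v u w hu hw).deleteEdges fun hx hy => ?_⟩
  by_cases hvz : z = v
  · exact hvz ▸ h
  have hxz' : (G.deleteEdges {s(x, y)}).Adj x z :=
    deleteEdges_adj.2 ⟨hxz, by simp [hxz.ne', hyz.ne']⟩
  have hyz' : (G.deleteEdges {s(x, y)}).Adj y z :=
    deleteEdges_adj.2 ⟨hyz, by simp [hxz.ne', hyz.ne']⟩
  exact (ReachableAvoiding.of_adj hxz' hx hvz).trans (ReachableAvoiding.of_adj hyz' hy hvz).symm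

theorem MinTwoConnected.mem_edges_of_walk {x y z : V} (hG : MinTwoConnected G)
    (hxy : G.Adj x y) (hxz : G.Adj x z) (hyz : G.Adj y z)
    (p : G.Walk x y) (hp : z ∉ p.support) : s(x, y) ∈ p.edges := by
  by_contra he
  exact hG.2 _ hxy (hG.1.deleteEdges_of_reachableAvoiding hxz hyz
    ⟨p.toDeleteEdge _ he, by simpa using hp⟩)

end TwoConnected

theorem stmt4 {V : Type} [Fintype V] (G : SimpleGraph V) (hG : MinTwoConnected G)
    (hcard : 3 < Fintype.card V) : G.CliqueFree 3 := by
  classical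
  intro s hs
  have hconn := (twoConnected_iff.1 hG.1).2
  obtain ⟨w, -, hw⟩ := Finset.exists_mem_notMem_of_card_lt_card (s := s) (t := .univ)
    (by rwa [hs.card_eq, Finset.card_univ])
  have hexit : ∀ t ∈ s, ∃ a ∈ s, a ≠ t ∧
      ∃ q : G.Walk w a, ∀ v ∈ q.support, v ∈ s → v = a := by
    intro t ht
    obtain ⟨b, hb, hbt⟩ := s.exists_mem_ne (by rw [hs.card_eq]; norm_num) t
    obtain ⟨p, hp⟩ := hconn t w b (ne_of_mem_of_not_mem ht hw).symm hbt
    obtain ⟨a, hap, has, q, hq⟩ := p.exists_walk_to_first_mem (S := s) hb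
    exact ⟨a, has, fun h => hp (h ▸ hap), q, hq⟩
  obtain ⟨t, ht⟩ := Finset.card_pos.1 (by rw [hs.card_eq]; norm_num)
  obtain ⟨a, ha, -, qa, hqa⟩ := hexit t ht
  obtain ⟨b, hb, hba, qb, hqb⟩ := hexit a ha
  obtain ⟨c, hc⟩ : ((s.erase a).erase b).Nonempty := by
    rw [← Finset.card_pos, Finset.card_erase_of_mem (by simp [hba, hb]),
      Finset.card_erase_of_mem ha, hs.card_eq]
    norm_num
  obtain ⟨hcb, hca, hcs⟩ := by simpa only [Finset.mem_erase] using hc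
  obtain ⟨p, hpc, hpe⟩ := exists_walk_avoiding_of_walks_to_first_mem (S := s)
    ha hb hba.symm hcs hca hcb qa hqa qb hqb
  exact hpe (hG.mem_edges_of_walk (hs.1 ha hb hba.symm) (hs.1 ha hcs hca.symm)
    (hs.1 hb hcs hcb.symm) p hpc)
end

section
/- A graph G is minimally 2-connected if and only if G is 2-connected and no cycle of G has a chord. -/
open SimpleGraph

/-! Deleting a chord `ab` of a cycle `C` keeps a graph 2-connected: a walk avoiding a vertex `v`
can replace the edge `ab` by the arc of `C` from `a` to `b` that misses `v`. Conversely, if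
deleting an edge `xy` leaves a 2-connected graph `H`, then `H` has a cycle through `x` and `y`
(grown one ear at a time along a walk from `y` to `x`), and `xy` is a chord of that cycle. -/

lemma exists_ne_ne_of_three_le_card {V : Type} (h3 : 3 ≤ Nat.card V) (a b : V) :
    ∃ c, c ≠ a ∧ c ≠ b := by
  by_contra! h
  have : Finite V := Nat.finite_of_card_ne_zero (by omega)
  have hsurj : Function.Surjective ![a, b] := fun c => by
    by_cases hca : c = a
    · exact ⟨0, hca.symm⟩
    · exact ⟨1, (h c hca).symm⟩
  have := Nat.card_le_card_of_surjective _ hsurj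
  rw [Nat.card_fin] at this
  omega

namespace SimpleGraph

variable {V : Type} {G : SimpleGraph V}

lemma reachable_coe_deleteVerts_singleton_iff {v : V}
    {x y : ((⊤ : G.Subgraph).deleteVerts {v}).verts} :
    ((⊤ : G.Subgraph).deleteVerts {v}).coe.Reachable x y ↔ ∃ p : G.Walk x y, v ∉ p.support := by
  constructor
  · rintro ⟨q⟩
    refine ⟨q.map (Subgraph.hom _), fun hv => ?_⟩
    obtain ⟨z, -, hz⟩ := List.mem_map.mp ((Walk.support_map _ _) ▸ hv)
    simpa [← hz] using z.2
  · rintro ⟨p, hp⟩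
    have hS : ∀ z ∈ p.support, z ∈ ((⊤ : G.Subgraph).deleteVerts {v}).verts := by
      intro z hz
      simp only [Subgraph.deleteVerts_verts, Subgraph.verts_top, Set.mem_sdiff, Set.mem_univ,
        Set.mem_singleton_iff, true_and]
      rintro rfl
      exact hp hz
    let f : G.induce ((⊤ : G.Subgraph).deleteVerts {v}).verts →g
        ((⊤ : G.Subgraph).deleteVerts {v}).coe :=
      ⟨id, fun {a b} h => by
        have ha : (a : V) ≠ v := by simpa using a.2
        have hb : (b : V) ≠ v := by simpa using b.2
        simpa [ha, hb] using h⟩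
    exact (p.induce _ hS).reachable.map f

namespace Walk

lemma IsPath.append_of_forall_mem_support {u v w : V} {p : G.Walk u v} {q : G.Walk v w}
    (hp : p.IsPath) (hq : q.IsPath) (h : ∀ x ∈ p.support, x ∈ q.support → x = v) :
    (p.append q).IsPath := by
  have hq' := hq.support_nodup
  rw [← cons_tail_support, List.nodup_cons] at hq'
  rw [isPath_def, support_append, List.nodup_append]
  refine ⟨hp.support_nodup, hq'.2, fun x hx y hy hxy => ?_⟩
  subst hxy
  obtain rfl := h x hx (List.mem_of_mem_tail hy)
  exact hq'.1 hy

section DecidableEq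

variable [DecidableEq V] {u w : V}

lemma IsCycle.isPath_dropUntil {c : G.Walk u u} (hc : c.IsCycle) (hw : w ∈ c.support)
    (hwu : w ≠ u) : (c.dropUntil w hw).IsPath :=
  IsCycle.isPath_of_append_right (not_nil_of_ne hwu.symm) (by rwa [take_spec])

lemma mem_support_takeUntil_or_mem_support_dropUntil {v x : V} (p : G.Walk u v)
    (hw : w ∈ p.support) (hx : x ∈ p.support) :
    x ∈ (p.takeUntil w hw).support ∨ x ∈ (p.dropUntil w hw).support := by
  rwa [← mem_support_append_iff, take_spec]

lemma IsCycle.eq_or_eq_of_mem_support_takeUntil_of_mem_support_dropUntil {c : G.Walk u u}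
    (hc : c.IsCycle) (hw : w ∈ c.support) {x : V} (h₁ : x ∈ (c.takeUntil w hw).support)
    (h₂ : x ∈ (c.dropUntil w hw).support) : x = u ∨ x = w := by
  by_contra! hx
  have hnd := hc.support_nodup
  rw [← take_spec c hw, tail_support_append, List.nodup_append] at hnd
  rw [← cons_tail_support] at h₁ h₂
  exact hnd.2.2 x ((List.mem_cons.mp h₁).resolve_left hx.1) x
    ((List.mem_cons.mp h₂).resolve_left hx.2) rfl

end DecidableEq

variable {u a b : V} {c : G.Walk u u}

lemma IsCycle.exists_walk_edges_subset_not_mem_support (hc : c.IsCycle) (ha : a ∈ c.support)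
    (hb : b ∈ c.support) {w : V} (hwa : w ≠ a) (hwb : w ≠ b) :
    ∃ p : G.Walk a b, (∀ e ∈ p.edges, e ∈ c.edges) ∧ w ∉ p.support := by
  classical
  set c' := c.rotate a ha
  have hb' : b ∈ c'.support := (mem_support_rotate_iff ..).mpr hb
  have hedges : ∀ e ∈ c'.edges, e ∈ c.edges := fun e he => (rotate_edges c a ha).mem_iff.mp he
  by_cases hw : w ∈ (c'.takeUntil b hb').support
  · refine ⟨(c'.dropUntil b hb').reverse,
      fun e he => hedges e (edges_dropUntil_subset_edges _ _ (by simpa using he)), fun hw' => ?_⟩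
    rcases (hc.rotate ha).eq_or_eq_of_mem_support_takeUntil_of_mem_support_dropUntil hb' hw
      (by simpa using hw') with h | h
    exacts [hwa h, hwb h]
  · exact ⟨c'.takeUntil b hb', fun e he => hedges e (edges_takeUntil_subset_edges _ _ he), hw⟩

lemma IsCycle.exists_isPath_mem_support (hc : c.IsCycle) (ha : a ∈ c.support)
    (hb : b ∈ c.support) (hab : a ≠ b) {x : V} (hx : x ∈ c.support) :
    ∃ p : G.Walk a b, p.IsPath ∧ x ∈ p.support ∧ ∀ z ∈ p.support, z ∈ c.support := by
  classical
  set c' := c.rotate a ha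
  have hc' : c'.IsCycle := hc.rotate ha
  have hb' : b ∈ c'.support := (mem_support_rotate_iff ..).mpr hb
  have hsupp : ∀ z ∈ c'.support, z ∈ c.support := fun z => (mem_support_rotate_iff ..).mp
  rcases mem_support_takeUntil_or_mem_support_dropUntil c' hb'
    ((mem_support_rotate_iff ..).mpr hx) with h | h
  · exact ⟨c'.takeUntil b hb', hc'.isPath_takeUntil hb', h,
      fun z hz => hsupp z (support_takeUntil_subset_support _ _ hz)⟩
  · exact ⟨(c'.dropUntil b hb').reverse, (hc'.isPath_dropUntil hb' hab.symm).reverse,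
      by simpa using h,
      fun z hz => hsupp z (support_dropUntil_subset_support _ _ (by simpa using hz))⟩

end Walk

lemma exists_walk_deleteEdges_not_mem_support {a b v : V}
    (q : (G.deleteEdges {s(a, b)}).Walk a b) (hq : v ∉ q.support) {x y : V} (p : G.Walk x y)
    (hp : v ∉ p.support) : ∃ p' : (G.deleteEdges {s(a, b)}).Walk x y, v ∉ p'.support := by
  induction p with
  | nil => exact ⟨.nil, hp⟩
  | @cons x x' y h p ih =>
    rw [Walk.support_cons, List.mem_cons, not_or] at hp
    obtain ⟨p', hp'⟩ := ih hp.2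
    by_cases he : s(x, x') = s(a, b)
    · rcases Sym2.eq_iff.mp he with ⟨rfl, rfl⟩ | ⟨rfl, rfl⟩
      · exact ⟨q.append p', by simp [Walk.mem_support_append_iff, hq, hp']⟩
      · exact ⟨q.reverse.append p', by simp [Walk.mem_support_append_iff, hq, hp']⟩
    · exact ⟨.cons (deleteEdges_adj.mpr ⟨h, he⟩) p', by simp [hp.1, hp']⟩

end SimpleGraph

section

variable {V : Type} {G : SimpleGraph V}

theorem twoConnected_iff_s6 :
    TwoConnected G ↔ 3 ≤ Nat.card V ∧
      ∀ v x y : V, x ≠ v → y ≠ v → ∃ p : G.Walk x y, v ∉ p.support := by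
  refine and_congr_right fun h3 => forall_congr' fun v =>
    ⟨fun hconn x y hx hy => ?_, fun hwalk => ?_⟩
  · exact reachable_coe_deleteVerts_singleton_iff.mp
      (hconn.preconnected ⟨x, by simpa using hx⟩ ⟨y, by simpa using hy⟩)
  · obtain ⟨z, hz, -⟩ := exists_ne_ne_of_three_le_card h3 v v
    have : Nonempty ((⊤ : G.Subgraph).deleteVerts {v}).verts := ⟨⟨z, by simpa using hz⟩⟩
    exact ⟨fun x y => reachable_coe_deleteVerts_singleton_iff.mpr
      (hwalk x y (by simpa using x.2) (by simpa using y.2))⟩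

namespace TwoConnected

lemma exists_walk_not_mem_support (hG : TwoConnected G) {v x y : V} (hx : x ≠ v) (hy : y ≠ v) :
    ∃ p : G.Walk x y, v ∉ p.support :=
  (twoConnected_iff_s6.mp hG).2 v x y hx hy

theorem deleteEdges_of_isCycle {u a b : V} {c : G.Walk u u} (hG : TwoConnected G)
    (hc : c.IsCycle) (ha : a ∈ c.support) (hb : b ∈ c.support) (he : s(a, b) ∉ c.edges) :
    TwoConnected (G.deleteEdges {s(a, b)}) := by
  refine twoConnected_iff_s6.mpr ⟨hG.1, fun v x y hx hy => ?_⟩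
  obtain ⟨p, hp⟩ := hG.exists_walk_not_mem_support hx hy
  by_cases hvab : v = a ∨ v = b
  · refine ⟨p.toDeleteEdges _ fun e he' hmem => ?_, by simpa using hp⟩
    rw [Set.mem_singleton_iff] at hmem
    subst hmem
    rcases hvab with rfl | rfl
    exacts [hp (p.fst_mem_support_of_mem_edges he'), hp (p.snd_mem_support_of_mem_edges he')]
  · push Not at hvab
    obtain ⟨q, hqc, hqv⟩ := hc.exists_walk_edges_subset_not_mem_support ha hb hvab.1 hvab.2
    refine exists_walk_deleteEdges_not_mem_support
      (q.toDeleteEdges _ fun e he' hmem => he ?_) (by simpa using hqv) p hp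
    rw [Set.mem_singleton_iff] at hmem
    exact hmem ▸ hqc e he'

lemma preconnected (hG : TwoConnected G) : G.Preconnected := fun x y => by
  obtain ⟨w, hwx, hwy⟩ := exists_ne_ne_of_three_le_card hG.1 x y
  obtain ⟨p, -⟩ := hG.exists_walk_not_mem_support hwx.symm hwy.symm
  exact p.reachable

lemma exists_adj_ne (hG : TwoConnected G) {u v : V} (huv : u ≠ v) : ∃ z, G.Adj v z ∧ z ≠ u := by
  obtain ⟨t, htv, htu⟩ := exists_ne_ne_of_three_le_card hG.1 v u
  obtain ⟨p, hp⟩ := hG.exists_walk_not_mem_support huv.symm htu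
  obtain ⟨z, h, q, rfl⟩ := Walk.exists_eq_cons_of_ne htv.symm p
  exact ⟨z, h, fun hz => hp (by simp [← hz])⟩

lemma exists_isCycle_mem_edges_of_adj (hG : TwoConnected G) {x y : V} (h : G.Adj x y) :
    ∃ (u : V) (c : G.Walk u u), c.IsCycle ∧ s(x, y) ∈ c.edges := by
  refine adj_and_reachable_delete_edges_iff_exists_cycle.mp ⟨h, ?_⟩
  obtain ⟨y', hyy', hy'x⟩ := hG.exists_adj_ne h.ne
  obtain ⟨q, hq⟩ := hG.exists_walk_not_mem_support h.ne hyy'.ne'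
  refine reachable_deleteEdges_iff_exists_walk.mpr ⟨q.concat hyy'.symm, fun hmem => ?_⟩
  rw [Walk.edges_concat, List.concat_eq_append, List.mem_append, List.mem_singleton] at hmem
  rcases hmem with hmem | hmem
  · exact hq (q.snd_mem_support_of_mem_edges hmem)
  · rcases Sym2.eq_iff.mp hmem with ⟨rfl, -⟩ | ⟨rfl, -⟩
    exacts [hy'x rfl, h.ne rfl]

/-- The new cycle runs from `y` along a path that first meets `c` at some `u₀ ≠ y'`, then along
the arc of `c` from `u₀` to `y'` that contains `x`, and back to `y`. -/
lemma exists_isCycle_of_isCycle_of_adj (hG : TwoConnected G) {u x y y' : V} {c : G.Walk u u}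
    (hc : c.IsCycle) (hx : x ∈ c.support) (hy' : y' ∈ c.support) (hxy' : x ≠ y')
    (hy : y ∉ c.support) (hadj : G.Adj y' y) :
    ∃ (w : V) (c' : G.Walk w w), c'.IsCycle ∧ x ∈ c'.support ∧ y ∈ c'.support := by
  classical
  obtain ⟨W, hW⟩ := hG.exists_walk_not_mem_support hadj.ne' hxy'
  have hP := W.toPath.2
  set P := W.toPath.1
  have hy'P : y' ∉ P.support := fun h => hW (W.support_toPath_subset_support h)
  obtain ⟨u₀, hu₀c, hu₀P, hfirst⟩ := P.exists_mem_support_forall_mem_support_imp_eq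
    c.support.toFinset ⟨x, Finset.mem_filter.mpr ⟨List.mem_toFinset.mpr hx, P.end_mem_support⟩⟩
  rw [List.mem_toFinset] at hu₀c
  set Q := P.takeUntil u₀ hu₀P
  have hu₀y' : u₀ ≠ y' := fun h => hy'P (h ▸ hu₀P)
  obtain ⟨R, hR, hxR, hRc⟩ := hc.exists_isPath_mem_support hu₀c hy' hu₀y' hx
  have hQR : (Q.append R).IsPath := (hP.takeUntil hu₀P).append_of_forall_mem_support hR
    fun z hzQ hzR => hfirst z (List.mem_toFinset.mpr (hRc z hzR)) hzQ
  refine ⟨y', .cons hadj (Q.append R), (Walk.cons_isCycle_iff _ _).mpr ⟨hQR, fun he => ?_⟩,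
    by simp [Walk.mem_support_append_iff, hxR], by simp⟩
  rw [Walk.edges_append, List.mem_append] at he
  rcases he with he | he
  · exact hy'P (P.support_takeUntil_subset_support hu₀P (Q.fst_mem_support_of_mem_edges he))
  · exact hy (hRc _ (R.snd_mem_support_of_mem_edges he))

theorem exists_isCycle_mem_support (hG : TwoConnected G) {x y : V} (hxy : x ≠ y) :
    ∃ (u : V) (c : G.Walk u u), c.IsCycle ∧ x ∈ c.support ∧ y ∈ c.support := by
  suffices ∀ (y : V) (p : G.Walk y x), y ≠ x →
      ∃ (u : V) (c : G.Walk u u), c.IsCycle ∧ x ∈ c.support ∧ y ∈ c.support from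
    this y (hG.preconnected y x).some hxy.symm
  clear hxy
  intro y p
  induction p with
  | nil => exact fun h => (h rfl).elim
  | @cons y y' x hadj p ih =>
    intro hyx
    by_cases hy'x : y' = x
    · subst hy'x
      obtain ⟨u, c, hc, he⟩ := hG.exists_isCycle_mem_edges_of_adj hadj.symm
      exact ⟨u, c, hc, c.fst_mem_support_of_mem_edges he, c.snd_mem_support_of_mem_edges he⟩
    obtain ⟨u, c, hc, hxc, hy'c⟩ := ih hy'x
    by_cases hyc : y ∈ c.support
    · exact ⟨u, c, hc, hxc, hyc⟩
    · exact hG.exists_isCycle_of_isCycle_of_adj hc hxc hy'c (Ne.symm hy'x) hyc hadj.symm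

end TwoConnected

end

theorem stmt6_general {V : Type} (G : SimpleGraph V) :
    MinTwoConnected G ↔
      (TwoConnected G ∧ ∀ (v : V) (c : G.Walk v v), c.IsCycle → ¬ HasChord G c) := by
  refine ⟨fun ⟨hG, hmin⟩ => ⟨hG, fun v c hc ⟨a, b, hab, ha, hb, he⟩ =>
    hmin s(a, b) hab (hG.deleteEdges_of_isCycle hc ha hb he)⟩, fun ⟨hG, hchordless⟩ => ⟨hG, ?_⟩⟩
  rintro ⟨x, y⟩ (hxy : G.Adj x y) hG'
  obtain ⟨u, c, hc, hx, hy⟩ := hG'.exists_isCycle_mem_support hxy.ne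
  have hle : G.deleteEdges {s(x, y)} ≤ G := deleteEdges_le _
  refine hchordless u (c.mapLe hle) (hc.mapLe hle) ⟨x, y, hxy, ?_, ?_, fun he => ?_⟩
  · simpa [Walk.support_mapLe_eq_support] using hx
  · simpa [Walk.support_mapLe_eq_support] using hy
  rw [Walk.edges_mapLe_eq_edges] at he
  simpa using c.edges_subset_edgeSet he

theorem stmt6 {V : Type} [Fintype V] (G : SimpleGraph V) :
    MinTwoConnected G ↔
      (TwoConnected G ∧ ∀ (v : V) (c : G.Walk v v), c.IsCycle → ¬ HasChord G c) :=
  stmt6_general G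
end

section
/- For every odd integer m > 5, the spectral radius of SK_{2,(m-1)/2} is the largest root of x^3 - x^2 - (m-2)x + (m-3) = 0. -/
/-!
Write `(m - 1) / 2 = s + 1` and `p(x) = x³ - x² - (m - 2)x + (m - 3)`. In an eigenvector `v` of
`SK2 (s + 1)` with eigenvalue `μ`, the `s` vertices adjacent to both vertices of the small part
carry `(a + b) / μ`, where `a` and `b` are the values on the small part; eliminating the other
three coordinates gives `p(μ) (a + b) = 0`, and for `μ > 2` the case `a + b = 0` forces `v = 0`.
Conversely every root `ρ` of `p` is an eigenvalue: take `ρ / 2` on the small part, `ρ² / 2 - s`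
on the subdivision vertex and its neighbour in the large part, and `1` elsewhere. Since
`p(2) = 5 - m < 0`, `p` has a root above `2`, so the largest eigenvalue is the largest root.
-/

open SimpleGraph

open Matrix Sum

theorem Matrix.mem_spectrum_iff_exists_mulVec_eq_smul {n K : Type*} [Fintype n] [DecidableEq n]
    [Field K] (A : Matrix n n K) (μ : K) :
    μ ∈ spectrum K A ↔ ∃ v ≠ 0, A *ᵥ v = μ • v := by
  rw [← Matrix.spectrum_toLin', ← Module.End.hasEigenvalue_iff_mem_spectrum]
  constructor
  · intro h
    obtain ⟨v, hv⟩ := h.exists_hasEigenvector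
    exact ⟨v, hv.2, by simpa using hv.apply_eq_smul⟩
  · rintro ⟨v, hv0, hv⟩
    exact Module.End.hasEigenvalue_of_hasEigenvector
      ⟨by simpa [Module.End.mem_eigenspace_iff] using hv, hv0⟩

theorem Set.Finite.isGreatest_csSup_of_subset {α : Type*} [ConditionallyCompleteLinearOrder α]
    {S R : Set α} (hS : S.Finite) (hRS : R ⊆ S) {c : α} (hR : ∃ x ∈ R, c < x)
    (hSR : ∀ μ ∈ S, c < μ → μ ∈ R) : IsGreatest R (sSup S) := by
  obtain ⟨x, hxR, hcx⟩ := hR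
  have hne : S.Nonempty := ⟨x, hRS hxR⟩
  exact ⟨hSR _ (hne.csSup_mem hS) (hcx.trans_le (le_csSup hS.bddAbove (hRS hxR))),
    fun y hy => le_csSup hS.bddAbove (hRS hy)⟩

open scoped Classical in
theorem adjMat_mulVec_apply {V : Type} [Fintype V] (G : SimpleGraph V) (v : V → ℝ) (x : V) :
    (adjMat G *ᵥ v) x = ∑ y, if G.Adj x y then v y else 0 := by
  simp [adjMat, Matrix.mulVec, dotProduct]

def sk2Cubic (m x : ℝ) : ℝ := x ^ 3 - x ^ 2 - (m - 2) * x + (m - 3)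

theorem exists_sk2Cubic_root_gt_two {m : ℝ} (hm : 5 < m) : ∃ x, sk2Cubic m x = 0 ∧ 2 < x := by
  have hcont : ContinuousOn (sk2Cubic m) (Set.Icc 2 m) := by
    unfold sk2Cubic; fun_prop
  obtain ⟨x, hx, hx0⟩ := intermediate_value_Icc (by linarith) hcont
    (show (0 : ℝ) ∈ Set.Icc (sk2Cubic m 2) (sk2Cubic m m) by
      constructor <;> unfold sk2Cubic <;> nlinarith)
  refine ⟨x, hx0, lt_of_le_of_ne hx.1 ?_⟩
  rintro rfl
  unfold sk2Cubic at hx0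
  linarith

theorem SK2_mulVec_eq_smul_iff {s : ℕ} (v : Fin 3 ⊕ Fin (s + 1) → ℝ) (μ : ℝ) :
    adjMat (SK2 (s + 1)) *ᵥ v = μ • v ↔
      v (inl 2) + ∑ i : Fin s, v (inr i.succ) = μ * v (inl 0) ∧
      v (inr 0) + ∑ i : Fin s, v (inr i.succ) = μ * v (inl 1) ∧
      v (inl 0) + v (inr 0) = μ * v (inl 2) ∧
      v (inl 1) + v (inl 2) = μ * v (inr 0) ∧
      ∀ i : Fin s, v (inl 0) + v (inl 1) = μ * v (inr i.succ) := by
  simp [funext_iff, Sum.forall, Fin.forall_fin_succ, adjMat_mulVec_apply, Fintype.sum_sum_type,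
    Fin.sum_univ_succ, SK2, and_assoc]

theorem SK2_mem_spectrum_of_sk2Cubic_eq_zero {s : ℕ} (hs : 0 < s) {ρ : ℝ}
    (hρ : sk2Cubic (2 * s + 3) ρ = 0) : ρ ∈ spectrum ℝ (adjMat (SK2 (s + 1))) := by
  set w : ℝ := ρ ^ 2 / 2 - s
  let v : Fin 3 ⊕ Fin (s + 1) → ℝ := Sum.elim ![ρ / 2, ρ / 2, w] (Fin.cons w fun _ => 1)
  have hv0 : v ≠ 0 := fun h => one_ne_zero (congrFun h (inr (Fin.succ ⟨0, hs⟩)))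
  refine (mem_spectrum_iff_exists_mulVec_eq_smul _ ρ).2
    ⟨v, hv0, (SK2_mulVec_eq_smul_iff v ρ).2 ?_⟩
  unfold sk2Cubic at hρ
  simp only [v, elim_inl, elim_inr, Fin.cons_zero, Fin.cons_succ, cons_val_zero, cons_val_one,
    cons_val, Finset.sum_const, Finset.card_univ, Fintype.card_fin, nsmul_eq_mul]
  refine ⟨by ring, by ring, by linear_combination -hρ / 2, by linear_combination -hρ / 2,
    fun _ => by ring⟩

theorem SK2_sk2Cubic_eq_zero_of_mem_spectrum {s : ℕ} {μ : ℝ}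
    (hμ : μ ∈ spectrum ℝ (adjMat (SK2 (s + 1)))) (hμ2 : 2 < μ) :
    sk2Cubic (2 * s + 3) μ = 0 := by
  obtain ⟨v, hv0, hv⟩ := (mem_spectrum_iff_exists_mulVec_eq_smul _ μ).1 hμ
  obtain ⟨e0, e1, e2, e3, leaf⟩ := (SK2_mulVec_eq_smul_iff v μ).1 hv
  set a := v (inl 0)
  set b := v (inl 1)
  set c := v (inl 2)
  set r := v (inr 0)
  set S := ∑ i : Fin s, v (inr i.succ)
  have eS : μ * S = s * (a + b) := by simp [S, Finset.mul_sum, ← leaf, mul_add]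
  have hab : a + b ≠ 0 := by
    intro hab
    have hμ0 : μ ≠ 0 := by positivity
    have hS : S = 0 := by
      rw [hab, mul_zero, mul_eq_zero] at eS
      exact eS.resolve_left hμ0
    have ha : a = 0 := by
      have h : (μ ^ 2 + μ - 1) * a = 0 := by
        linear_combination -e2 + e1 - μ * e0 + μ * hab - (1 - μ) * hS
      exact (mul_eq_zero.1 h).resolve_left (by nlinarith)
    have hb : b = 0 := by linear_combination hab - ha
    refine hv0 (funext fun x => ?_)
    rcases x with j | i
    · fin_cases j
      · exact ha
      · exact hb
      · show c = 0
        linear_combination e0 - hS + μ * ha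
    · cases i using Fin.cases with
      | zero =>
        show r = 0
        linear_combination e1 - hS + μ * hb
      | succ i =>
        have h := leaf i
        rw [ha, hb, add_zero, eq_comm, mul_eq_zero] at h
        exact h.resolve_left hμ0
  have key : sk2Cubic (2 * s + 3) μ * (a + b) = 0 := by
    unfold sk2Cubic
    linear_combination (μ - 1) * (-μ * e0 - μ * e1 + 2 * eS) - μ * (e2 + e3)
  exact (mul_eq_zero.1 key).resolve_right hab

theorem stmt7 (m : ℕ) (hodd : Odd m) (h5 : 5 < m) :
    IsGreatest {x : ℝ | x ^ 3 - x ^ 2 - ((m : ℝ) - 2) * x + ((m : ℝ) - 3) = 0}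
      (specRad (SK2 ((m - 1) / 2))) := by
  obtain ⟨k, rfl⟩ := hodd
  obtain ⟨s, rfl⟩ : ∃ s, k = s + 1 := ⟨k - 1, by omega⟩
  have hs : (2 * (s + 1) + 1 - 1) / 2 = s + 1 := by omega
  have hm : ((2 * (s + 1) + 1 : ℕ) : ℝ) = 2 * s + 3 := by push_cast; ring
  rw [hs]
  change IsGreatest {x | sk2Cubic _ x = 0} _
  rw [hm]
  exact (Matrix.finite_spectrum _).isGreatest_csSup_of_subset
    (fun ρ hρ => SK2_mem_spectrum_of_sk2Cubic_eq_zero (by omega) hρ)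
    (exists_sk2Cubic_root_gt_two (by rw [← hm]; exact_mod_cast h5))
    (fun _ hμ => SK2_sk2Cubic_eq_zero_of_mem_spectrum hμ)
end

section
/- For every odd integer m ≥ 7, the largest real root ρ of the polynomial x^3 - x^2 - (m-2)x + (m-3) satisfies √(m-2) < ρ < √(m-1). -/
open SimpleGraph

/-!
Writing `f x = (x ^ 2 - (m - 1)) * (x - 1) + (x - 2)` shows that `f (√(m - 2)) = -1` and that
`f` is positive on `[√(m - 1), ∞)` as soon as `m > 5`. Hence the intermediate value theorem puts
a root in `(√(m - 2), √(m - 1))`, and no root lies at or beyond `√(m - 1)`.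
-/

theorem IsGreatest.mem_Ioo_of_neg_of_forall_pos {α : Type*} [ConditionallyCompleteLinearOrder α]
    [TopologicalSpace α] [OrderTopology α] [DenselyOrdered α] {f : α → ℝ} (hf : Continuous f)
    {a b ρ : α} (hab : a ≤ b) (ha : f a < 0) (hb : ∀ x, b ≤ x → 0 < f x)
    (hρ : IsGreatest {x | f x = 0} ρ) : ρ ∈ Set.Ioo a b := by
  obtain ⟨r, ⟨har, -⟩, hr⟩ :=
    intermediate_value_Ioo hab hf.continuousOn ⟨ha, hb b le_rfl⟩
  refine ⟨har.trans_le (hρ.2 hr), lt_of_not_ge fun hbρ => ?_⟩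
  exact (hb ρ hbρ).ne' hρ.1

def cubic (c x : ℝ) : ℝ :=
  x ^ 3 - x ^ 2 - (c - 2) * x + (c - 3)

theorem cubic_eq (c x : ℝ) : cubic c x = (x ^ 2 - (c - 1)) * (x - 1) + (x - 2) := by
  unfold cubic
  ring

theorem continuous_cubic (c : ℝ) : Continuous (cubic c) := by
  unfold cubic
  fun_prop

theorem cubic_sqrt_sub_two {c : ℝ} (hc : 2 ≤ c) : cubic c √(c - 2) = -1 := by
  have hs : √(c - 2) ^ 2 = c - 2 := Real.sq_sqrt (by linarith)
  rw [cubic_eq, hs]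
  ring

theorem cubic_pos_of_sqrt_sub_one_le {c x : ℝ} (hc : 5 < c) (hx : √(c - 1) ≤ x) :
    0 < cubic c x := by
  have htwo : 2 < √(c - 1) := (Real.lt_sqrt zero_le_two).2 (by linarith)
  have hsq : c - 1 ≤ x ^ 2 := (Real.sqrt_le_left (by linarith)).1 hx
  rw [cubic_eq]
  nlinarith [mul_nonneg (sub_nonneg.2 hsq) (by linarith : (0 : ℝ) ≤ x - 1)]

theorem stmt8_general (m : ℕ) (h7 : 7 ≤ m) (ρ : ℝ)
    (hρ : IsGreatest {x : ℝ | x ^ 3 - x ^ 2 - ((m : ℝ) - 2) * x + ((m : ℝ) - 3) = 0} ρ) :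
    Real.sqrt ((m : ℝ) - 2) < ρ ∧ ρ < Real.sqrt ((m : ℝ) - 1) := by
  have hm : (5 : ℝ) < m := by exact_mod_cast (by omega : 5 < m)
  refine IsGreatest.mem_Ioo_of_neg_of_forall_pos (continuous_cubic m)
    (Real.sqrt_le_sqrt (by linarith)) ?_ (fun x hx => cubic_pos_of_sqrt_sub_one_le hm hx) hρ
  rw [cubic_sqrt_sub_two (by linarith)]
  norm_num

theorem stmt8 (m : ℕ) (hodd : Odd m) (h7 : 7 ≤ m) (ρ : ℝ)
    (hρ : IsGreatest {x : ℝ | x ^ 3 - x ^ 2 - ((m : ℝ) - 2) * x + ((m : ℝ) - 3) = 0} ρ) :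
    Real.sqrt ((m : ℝ) - 2) < ρ ∧ ρ < Real.sqrt ((m : ℝ) - 1) :=
  stmt8_general m h7 ρ hρ
end

section
/- For every odd integer m > 5, the spectral radius of SK_{2,(m-1)/2} satisfies √(m-2) < ρ(SK_{2,(m-1)/2}) < √(m-1). -/
open SimpleGraph

/-!
Both bounds are tested on vectors that are constant on the `s = (m - 3) / 2` vertices of the large
part that avoid the subdivided edge; the adjacency matrix `A` preserves such vectors, acting on
them as a `5 × 5` matrix. With `r = √(m - 2)`, the test vector `x = (r, r, 1; 1, 2, …, 2)` has
Rayleigh quotient `r + 2 / (8s + 4) > r`, giving the lower bound. For the positive vector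
`w = (8, 8, 7; 7, 8, …, 8)` one has `A² w < (m - 1) w` entrywise as soon as `s ≥ 2`, so the
Collatz–Wielandt bound for the nonnegative matrix `A²` gives `ρ² < m - 1`.
-/

open Matrix
open scoped ComplexOrder

namespace Matrix

variable {n : Type*} [Fintype n]

theorem IsHermitian.posSemidef_algebraMap_sub [DecidableEq n] {𝕜 : Type*} [RCLike 𝕜]
    {A : Matrix n n 𝕜} (hA : A.IsHermitian) {r : ℝ} (h : ∀ i, hA.eigenvalues i ≤ r) :
    (algebraMap ℝ (Matrix n n 𝕜) r - A).PosSemidef := by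
  have hdiag : algebraMap ℝ (Matrix n n 𝕜) r - A =
      Unitary.conjStarAlgAut ℝ _ hA.eigenvectorUnitary
        (diagonal fun i => ((r - hA.eigenvalues i : ℝ) : 𝕜)) := by
    conv_lhs => rw [hA.spectral_theorem]
    rw [← AlgHomClass.commutes (Unitary.conjStarAlgAut ℝ (Matrix n n 𝕜) hA.eigenvectorUnitary) r]
    simp only [Unitary.conjStarAlgAut_apply, ← sub_mul, ← mul_sub]
    congr 2
    ext i j
    by_cases hij : i = j <;> simp [hij, algebraMap_eq_diagonal]
  rw [hdiag, Unitary.conjStarAlgAut_apply,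
    Unitary.isUnit_coe.posSemidef_star_right_conjugate_iff, posSemidef_diagonal_iff]
  intro i
  simpa using h i

theorem IsHermitian.exists_lt_eigenvalues_of_lt_dotProduct [DecidableEq n] {A : Matrix n n ℝ}
    (hA : A.IsHermitian) {r : ℝ} (x : n → ℝ) (h : r * (x ⬝ᵥ x) < x ⬝ᵥ (A *ᵥ x)) :
    ∃ i, r < hA.eigenvalues i := by
  by_contra! hle
  have := (hA.posSemidef_algebraMap_sub hle).dotProduct_mulVec_nonneg x
  simp only [star_trivial, Algebra.algebraMap_eq_smul_one, sub_mulVec, smul_mulVec, one_mulVec,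
    dotProduct_sub, dotProduct_smul, smul_eq_mul, sub_nonneg] at this
  linarith

theorem exists_mulVec_eq_smul_of_mem_spectrum [DecidableEq n] {K : Type*} [Field K]
    {A : Matrix n n K} {μ : K} (hμ : μ ∈ spectrum K A) : ∃ v : n → K, v ≠ 0 ∧ A *ᵥ v = μ • v := by
  rw [spectrum.mem_iff, isUnit_iff_isUnit_det, isUnit_iff_ne_zero, not_not] at hμ
  obtain ⟨v, hv0, hv⟩ := exists_mulVec_eq_zero_iff.mpr hμ
  rw [sub_mulVec, Algebra.algebraMap_eq_smul_one, smul_mulVec, one_mulVec, sub_eq_zero] at hv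
  exact ⟨v, hv0, hv.symm⟩

theorem abs_mulVec_apply_le {B : Matrix n n ℝ} (hB : ∀ i j, 0 ≤ B i j) {v u : n → ℝ}
    (hvu : ∀ j, |v j| ≤ u j) (i : n) : |(B *ᵥ v) i| ≤ (B *ᵥ u) i :=
  calc |∑ j, B i j * v j| ≤ ∑ j, |B i j * v j| := Finset.abs_sum_le_sum_abs _ _
    _ = ∑ j, B i j * |v j| := by simp only [abs_mul, abs_of_nonneg (hB i _)]
    _ ≤ ∑ j, B i j * u j :=
      Finset.sum_le_sum fun j _ => mul_le_mul_of_nonneg_left (hvu j) (hB i j)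

/-- The Collatz–Wielandt bound. -/
theorem abs_lt_of_mulVec_lt_smul {B : Matrix n n ℝ} (hB : ∀ i j, 0 ≤ B i j) {w : n → ℝ}
    (hw : ∀ i, 0 < w i) {c : ℝ} (hBw : ∀ i, (B *ᵥ w) i < (c • w) i) {μ : ℝ} {v : n → ℝ}
    (hv : v ≠ 0) (hBv : B *ᵥ v = μ • v) : |μ| < c := by
  obtain ⟨j, hj⟩ := Function.ne_iff.mp hv
  obtain ⟨i₀, -, hmax⟩ :=
    Finset.exists_max_image Finset.univ (fun i => |v i| / w i) ⟨j, Finset.mem_univ j⟩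
  set k := |v i₀| / w i₀
  have hk : 0 < k := (div_pos (abs_pos.mpr hj) (hw j)).trans_le (hmax j (Finset.mem_univ j))
  have hvw : ∀ i, |v i| ≤ (k • w) i := fun i =>
    (div_le_iff₀ (hw i)).mp (hmax i (Finset.mem_univ i))
  have hvi₀ : |v i₀| = k * w i₀ := (div_mul_cancel₀ _ (hw i₀).ne').symm
  have hlt : |μ| * |v i₀| < c * |v i₀| :=
    calc |μ| * |v i₀| = |(B *ᵥ v) i₀| := by rw [hBv, Pi.smul_apply, smul_eq_mul, abs_mul]
      _ ≤ (B *ᵥ (k • w)) i₀ := abs_mulVec_apply_le hB hvw i₀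
      _ = k * (B *ᵥ w) i₀ := by rw [mulVec_smul, Pi.smul_apply, smul_eq_mul]
      _ < k * (c * w i₀) := mul_lt_mul_of_pos_left (hBw i₀) hk
      _ = c * |v i₀| := by rw [hvi₀]; ring
  exact lt_of_mul_lt_mul_right hlt (abs_nonneg _)

end Matrix

section SpectralRadius

variable {V : Type} [Fintype V] (G : SimpleGraph V)

theorem isHermitian_adjMat : (adjMat G).IsHermitian := by
  classical
  ext i j
  simp only [adjMat, conjTranspose_apply, of_apply, star_trivial]
  exact if_congr (G.adj_comm j i) rfl rfl

theorem adjMat_nonneg (i j : V) : 0 ≤ adjMat G i j := by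
  simp only [adjMat, of_apply]
  split <;> norm_num

variable [DecidableEq V]

theorem le_specRad {μ : ℝ} (hμ : μ ∈ spectrum ℝ (adjMat G)) : μ ≤ specRad G :=
  le_csSup (adjMat G).finite_spectrum.bddAbove hμ

theorem specRad_mem_spectrum [Nonempty V] : specRad G ∈ spectrum ℝ (adjMat G) :=
  Set.Nonempty.csSup_mem
    ⟨_, (isHermitian_adjMat G).eigenvalues_mem_spectrum_real (Classical.arbitrary V)⟩
    (adjMat G).finite_spectrum

theorem lt_specRad_of_lt_dotProduct {r : ℝ} (x : V → ℝ)
    (h : r * (x ⬝ᵥ x) < x ⬝ᵥ (adjMat G *ᵥ x)) : r < specRad G := by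
  obtain ⟨i, hi⟩ := (isHermitian_adjMat G).exists_lt_eigenvalues_of_lt_dotProduct x h
  exact hi.trans_le (le_specRad G ((isHermitian_adjMat G).eigenvalues_mem_spectrum_real i))

theorem specRad_sq_lt_of_mulVec_lt [Nonempty V] {w : V → ℝ} (hw : ∀ i, 0 < w i) {c : ℝ}
    (h : ∀ i, (adjMat G *ᵥ (adjMat G *ᵥ w)) i < (c • w) i) : specRad G ^ 2 < c := by
  obtain ⟨v, hv, hAv⟩ := exists_mulVec_eq_smul_of_mem_spectrum (specRad_mem_spectrum G)
  have hA2 : (adjMat G * adjMat G) *ᵥ v = specRad G ^ 2 • v := by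
    rw [← mulVec_mulVec, hAv, mulVec_smul, hAv, smul_smul, sq]
  have hnonneg : ∀ i j, 0 ≤ (adjMat G * adjMat G) i j := fun i j =>
    Finset.sum_nonneg fun k _ => mul_nonneg (adjMat_nonneg G i k) (adjMat_nonneg G k j)
  simp only [mulVec_mulVec] at h
  simpa [abs_of_nonneg (sq_nonneg (specRad G))] using
    abs_lt_of_mulVec_lt_smul hnonneg hw h hv hA2

end SpectralRadius

namespace SK2

variable {s : ℕ}

@[simp] theorem adj_inl_inl {a b : Fin 3} :
    (SK2 (s + 1)).Adj (.inl a) (.inl b) ↔ a = 0 ∧ b = 2 ∨ a = 2 ∧ b = 0 := by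
  simp [SK2, SimpleGraph.fromRel_adj]
  omega

@[simp] theorem adj_inl_inr {a : Fin 3} {j : Fin (s + 1)} :
    (SK2 (s + 1)).Adj (.inl a) (.inr j) ↔ a = 2 ∧ j = 0 ∨ a = 1 ∨ a = 0 ∧ j ≠ 0 := by
  simp [SK2, SimpleGraph.fromRel_adj]

@[simp] theorem adj_inr_inl {a : Fin 3} {j : Fin (s + 1)} :
    (SK2 (s + 1)).Adj (.inr j) (.inl a) ↔ a = 2 ∧ j = 0 ∨ a = 1 ∨ a = 0 ∧ j ≠ 0 := by
  rw [SimpleGraph.adj_comm, adj_inl_inr]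

@[simp] theorem not_adj_inr_inr {i j : Fin (s + 1)} :
    ¬ (SK2 (s + 1)).Adj (.inr i) (.inr j) := by
  simp [SK2, SimpleGraph.fromRel_adj]

def vec (s : ℕ) (a b c d e : ℝ) : Fin 3 ⊕ Fin (s + 1) → ℝ :=
  Sum.elim ![a, b, c] (Fin.cases d fun _ => e)

theorem adjMat_mulVec_vec (a b c d e : ℝ) :
    adjMat (SK2 (s + 1)) *ᵥ vec s a b c d e =
      vec s (c + s * e) (d + s * e) (a + d) (b + c) (a + b) := by
  funext i
  rcases i with i | j
  · fin_cases i <;> simp [mulVec, dotProduct, adjMat, vec, Fintype.sum_sum_type,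
      Fin.sum_univ_succ]
  · cases j using Fin.cases <;> simp [mulVec, dotProduct, adjMat, vec, Fintype.sum_sum_type,
      Fin.sum_univ_succ]

theorem vec_dotProduct_vec (a b c d e a' b' c' d' e' : ℝ) :
    vec s a b c d e ⬝ᵥ vec s a' b' c' d' e' =
      a * a' + b * b' + c * c' + d * d' + s * (e * e') := by
  simp [dotProduct, vec, Fintype.sum_sum_type, Fin.sum_univ_succ]
  ring

theorem smul_vec (k a b c d e : ℝ) :
    k • vec s a b c d e = vec s (k * a) (k * b) (k * c) (k * d) (k * e) := by
  funext i
  rcases i with i | j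
  · fin_cases i <;> simp [vec]
  · cases j using Fin.cases <;> simp [vec]

theorem vec_lt_vec {a b c d e a' b' c' d' e' : ℝ} (ha : a < a') (hb : b < b') (hc : c < c')
    (hd : d < d') (he : e < e') (i : Fin 3 ⊕ Fin (s + 1)) :
    vec s a b c d e i < vec s a' b' c' d' e' i := by
  rcases i with i | j
  · fin_cases i <;> simpa [vec]
  · cases j using Fin.cases <;> simpa [vec]

theorem vec_pos {a b c d e : ℝ} (ha : 0 < a) (hb : 0 < b) (hc : 0 < c) (hd : 0 < d)
    (he : 0 < e) (i : Fin 3 ⊕ Fin (s + 1)) : 0 < vec s a b c d e i := by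
  rcases i with i | j
  · fin_cases i <;> simpa [vec]
  · cases j using Fin.cases <;> simpa [vec]

end SK2

theorem stmt9 (m : ℕ) (hodd : Odd m) (h5 : 5 < m) :
    Real.sqrt ((m : ℝ) - 2) < specRad (SK2 ((m - 1) / 2)) ∧
      specRad (SK2 ((m - 1) / 2)) < Real.sqrt ((m : ℝ) - 1) := by
  obtain ⟨s, hs, hms⟩ : ∃ s, 2 ≤ s ∧ m = 2 * s + 3 := by
    obtain ⟨k, rfl⟩ := hodd
    exact ⟨k - 1, by omega, by omega⟩
  have ht : (m - 1) / 2 = s + 1 := by omega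
  rw [ht]
  have hsR : (2 : ℝ) ≤ s := by exact_mod_cast hs
  have hmR : (m : ℝ) = 2 * s + 3 := by rw [hms]; push_cast; ring
  set r := Real.sqrt ((m : ℝ) - 2)
  have hr : r * r = 2 * s + 1 := by
    rw [Real.mul_self_sqrt (by linarith), hmR]; ring
  have hlow : r < specRad (SK2 (s + 1)) := by
    apply lt_specRad_of_lt_dotProduct _ (SK2.vec s r r 1 1 2)
    rw [SK2.adjMat_mulVec_vec, SK2.vec_dotProduct_vec, SK2.vec_dotProduct_vec]
    nlinarith [Real.sqrt_nonneg ((m : ℝ) - 2)]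
  refine ⟨hlow, (Real.lt_sqrt (hlow.le.trans' (Real.sqrt_nonneg _))).mpr ?_⟩
  rw [hmR]
  refine specRad_sq_lt_of_mulVec_lt (w := SK2.vec s 8 8 7 7 8) _
    (SK2.vec_pos (by norm_num) (by norm_num) (by norm_num) (by norm_num) (by norm_num)) fun i => ?_
  rw [SK2.adjMat_mulVec_vec, SK2.adjMat_mulVec_vec, SK2.smul_vec]
  apply SK2.vec_lt_vec <;> linarith
end

section
/- If G is a triangle-free graph with m edges, then the spectral radius of G satisfies ρ(G) ≤ √m, with equality if and only if G is a complete bipartite graph K_{a,b} (together with possible isolated vertices) with ab = m. -/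
/-!
Scale an eigenvector `v` for the eigenvalue `μ` so that its largest entry in absolute value is
`v u = 1`. Then `μ² = μ² v u = ∑_{w ∼ u} ∑_{z ∼ w} v z ≤ ∑_{w ∼ u} deg w`, and since `G` has no
triangles, the edges at distinct neighbours of `u` are distinct, so this sum is at most `m`.

If `μ² = m`, both inequalities are tight: every edge meets `N(u)`, and `v = 1` on the second
neighbourhood `T = N(N(u))`. So every `t ∈ T` is again a maximum of `v`, and every edge also meets
`N(t)`. Triangle-freeness makes `N(u)` and `T` disjoint, so the edges are exactly the pairs
between `N(u)` and `T`, and all other vertices are isolated. Conversely, `K_{a,b}` has the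
eigenvector equal to `√b` on one side and `√a` on the other, with eigenvalue `√(ab)`.
-/

open SimpleGraph

namespace Matrix

variable {n : Type} [Fintype n] [DecidableEq n]

theorem mem_spectrum_iff_exists_mulVec_eq_smul_s11 {A : Matrix n n ℝ} {μ : ℝ} :
    μ ∈ spectrum ℝ A ↔ ∃ v : n → ℝ, v ≠ 0 ∧ A *ᵥ v = μ • v := by
  rw [← spectrum_toLin', ← Module.End.hasEigenvalue_iff_mem_spectrum]
  refine ⟨fun h => ?_, fun ⟨v, hv0, hv⟩ => ?_⟩
  · obtain ⟨v, hv⟩ := h.exists_hasEigenvector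
    exact ⟨v, hv.2, by simpa using hv.apply_eq_smul⟩
  · exact Module.End.hasEigenvalue_of_hasEigenvector
      ⟨Module.End.mem_eigenspace_iff.mpr (by simpa using hv), hv0⟩

theorem exists_eigenvector_abs_le_one {A : Matrix n n ℝ} {μ : ℝ} (hμ : μ ∈ spectrum ℝ A) :
    ∃ (v : n → ℝ) (u : n), A *ᵥ v = μ • v ∧ v u = 1 ∧ ∀ z, |v z| ≤ 1 := by
  obtain ⟨v, hv0, hv⟩ := mem_spectrum_iff_exists_mulVec_eq_smul_s11.mp hμ
  obtain ⟨z₀, hz₀⟩ := Function.ne_iff.mp hv0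
  have : Nonempty n := ⟨z₀⟩
  obtain ⟨u, hu⟩ := Finite.exists_max fun z => |v z|
  have hvu : v u ≠ 0 := fun h => hz₀ (abs_nonpos_iff.mp (by simpa [h] using hu z₀))
  refine ⟨(v u)⁻¹ • v, u, by rw [mulVec_smul, hv, smul_comm], by simp [hvu], fun z => ?_⟩
  rw [Pi.smul_apply, smul_eq_mul, abs_mul, abs_inv, inv_mul_le_one₀ (abs_pos.mpr hvu)]
  exact hu z

end Matrix

namespace SimpleGraph

section disjUnion

variable {α β : Type} {G : SimpleGraph α} {H : SimpleGraph β}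

@[simp]
theorem disjUnion_adj_inl_inl {a a' : α} :
    (disjUnion G H).Adj (.inl a) (.inl a') ↔ G.Adj a a' := by
  simp +contextual [disjUnion, G.adj_comm a', G.ne_of_adj]

@[simp]
theorem disjUnion_adj_inr_inr {b b' : β} :
    (disjUnion G H).Adj (.inr b) (.inr b') ↔ H.Adj b b' := by
  simp +contextual [disjUnion, H.adj_comm b', H.ne_of_adj]

@[simp]
theorem not_disjUnion_adj_inl_inr {a : α} {b : β} : ¬(disjUnion G H).Adj (.inl a) (.inr b) := by
  simp [disjUnion]

@[simp]
theorem not_disjUnion_adj_inr_inl {a : α} {b : β} : ¬(disjUnion G H).Adj (.inr b) (.inl a) := by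
  simp [disjUnion]

end disjUnion

open Finset Matrix

section adjMat

theorem adjMat_eq_adjMatrix {V : Type} [Fintype V] (G : SimpleGraph V) [DecidableRel G.Adj] :
    adjMat G = G.adjMatrix ℝ := by
  ext i j
  simp [adjMat, adjMatrix_apply]

theorem spectrum_adjMat_congr {V W : Type} [Fintype V] [DecidableEq V] [Fintype W]
    [DecidableEq W] {G : SimpleGraph V} {H : SimpleGraph W} (e : G ≃g H) :
    spectrum ℝ (adjMat G) = spectrum ℝ (adjMat H) := by
  classical
  have : adjMat H = reindexAlgEquiv ℝ ℝ e.toEquiv (adjMat G) := by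
    ext i j
    simp only [adjMat, coe_reindexAlgEquiv, reindex_apply, submatrix_apply, of_apply]
    change _ = if G.Adj (e.symm i) (e.symm j) then (1 : ℝ) else 0
    rw [e.symm.map_adj_iff]
  rw [this, AlgEquiv.spectrum_eq]

-- The eigenvalues of `adjMat G` sum to its trace, which is `0`.
theorem specRad_nonneg {V : Type} [Fintype V] [DecidableEq V] (G : SimpleGraph V) :
    0 ≤ specRad G := by
  classical
  have hA : (adjMat G).IsHermitian := by simp [adjMat_eq_adjMatrix, G.isSymm_adjMatrix]
  rw [specRad, hA.spectrum_real_eq_range_eigenvalues]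
  rcases isEmpty_or_nonempty V with hV | hV
  · simp [Set.range_eq_empty]
  have htrace : ∑ i, hA.eigenvalues i = 0 := by
    simpa [adjMat_eq_adjMatrix] using hA.trace_eq_sum_eigenvalues.symm
  obtain ⟨i, -, hi⟩ := exists_le_of_sum_le univ_nonempty (f := 0) (g := hA.eigenvalues)
    (by simpa using htrace.ge)
  exact hi.trans (le_csSup (Set.finite_range _).bddAbove ⟨i, rfl⟩)

theorem sqrt_card_mul_card_mem_spectrum {α β γ : Type} [Fintype α] [Fintype β] [Fintype γ]
    [DecidableEq α] [DecidableEq β] [DecidableEq γ] [Nonempty α] [Nonempty β] :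
    √(Fintype.card α * Fintype.card β) ∈
      spectrum ℝ (adjMat (disjUnion (completeBipartiteGraph α β) (⊥ : SimpleGraph γ))) := by
  refine mem_spectrum_iff_exists_mulVec_eq_smul_s11.mpr
    ⟨Sum.elim (Sum.elim (fun _ => √(Fintype.card β)) (fun _ => √(Fintype.card α))) 0, ?_, ?_⟩
  · intro h
    simpa using congrFun h (.inl (.inl (Classical.arbitrary α)))
  · ext ((i | j) | k) <;> simp [mulVec, dotProduct, adjMat, Fintype.sum_sum_type]
    · rw [mul_assoc, Real.mul_self_sqrt (Nat.cast_nonneg _), mul_comm]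
    · rw [mul_right_comm, Real.mul_self_sqrt (Nat.cast_nonneg _), mul_comm]

theorem sqrt_card_mul_card_le_specRad {α β γ : Type} [Fintype α] [Fintype β] [Fintype γ]
    [DecidableEq α] [DecidableEq β] [DecidableEq γ] :
    √(Fintype.card α * Fintype.card β) ≤
      specRad (disjUnion (completeBipartiteGraph α β) (⊥ : SimpleGraph γ)) := by
  by_cases h : Nonempty α ∧ Nonempty β
  · obtain ⟨_, _⟩ := h
    exact le_csSup (finite_spectrum _).bddAbove sqrt_card_mul_card_mem_spectrum
  · rw [not_and_or, not_nonempty_iff, not_nonempty_iff] at h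
    rcases h with _ | _ <;> simpa using specRad_nonneg _

end adjMat

variable {V : Type} [Fintype V] [DecidableEq V] {G : SimpleGraph V}

theorem nonempty_iso_disjUnion_of_adj_iff {S T : Finset V} (hST : Disjoint S T)
    (hadj : ∀ x y, G.Adj x y ↔ (x ∈ S ∧ y ∈ T) ∨ (x ∈ T ∧ y ∈ S)) :
    Nonempty (G ≃g disjUnion (completeBipartiteGraph (Fin #S) (Fin #T))
      (⊥ : SimpleGraph (Fin #(S ∪ T)ᶜ))) := by
  let g : (Fin #S ⊕ Fin #T) ⊕ Fin #(S ∪ T)ᶜ → V :=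
    Sum.elim (Sum.elim (fun i => S.equivFin.symm i) (fun j => T.equivFin.symm j))
      (fun k => (S ∪ T)ᶜ.equivFin.symm k)
  have hS (i) : (S.equivFin.symm i : V) ∈ S := Subtype.prop _
  have hT (j) : (T.equivFin.symm j : V) ∈ T := Subtype.prop _
  have hR (k) : ((S ∪ T)ᶜ.equivFin.symm k : V) ∉ S ∪ T := mem_compl.mp (Subtype.prop _)
  have hS' (i) : (S.equivFin.symm i : V) ∉ T := Finset.disjoint_left.mp hST (hS i)
  have hT' (j) : (T.equivFin.symm j : V) ∉ S := Finset.disjoint_right.mp hST (hT j)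
  have hinj : Function.Injective g := by
    refine .sumElim (.sumElim ?_ ?_ fun i j h => hS' i (h ▸ hT j)) ?_ ?_
    iterate 3 exact Subtype.val_injective.comp (Equiv.injective _)
    rintro (i | j) k h
    exacts [hR k (h ▸ mem_union_left _ (hS i)), hR k (h ▸ mem_union_right _ (hT j))]
  have hcard : Fintype.card ((Fin #S ⊕ Fin #T) ⊕ Fin #(S ∪ T)ᶜ) = Fintype.card V := by
    have := card_le_univ (S ∪ T)
    simp only [Fintype.card_sum, Fintype.card_fin, card_compl, card_union_of_disjoint hST]
      at this ⊢
    omega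
  let e := Equiv.ofBijective g ((Fintype.bijective_iff_injective_and_card g).mpr ⟨hinj, hcard⟩)
  refine ⟨RelIso.symm ⟨e, fun {p q} => ?_⟩⟩
  simp only [mem_union, not_or] at hR
  rcases p with (i | j) | k <;> rcases q with (i' | j') | k' <;>
    simp [e, g, hadj, hS, hT, hS', hT', hR]

variable [DecidableRel G.Adj]

omit [DecidableEq V] in
theorem neighborFinset_eq_of_adj_iff {S T : Finset V} (hST : Disjoint S T)
    (hadj : ∀ x y, G.Adj x y ↔ (x ∈ S ∧ y ∈ T) ∨ (x ∈ T ∧ y ∈ S)) {w : V} (hw : w ∈ S) :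
    G.neighborFinset w = T := by
  ext t
  simp [hadj, hw, Finset.disjoint_left.mp hST hw]

theorem card_biUnion_incidenceFinset_neighborFinset (hG : G.CliqueFree 3) (u : V) :
    #((G.neighborFinset u).biUnion (fun w => G.incidenceFinset w)) =
      ∑ w ∈ G.neighborFinset u, G.degree w := by
  rw [card_biUnion]
  · exact sum_congr rfl fun w _ => G.card_incidenceFinset_eq_degree w
  · intro w₁ h₁ w₂ h₂ hne
    refine Finset.disjoint_left.mpr fun e he₁ he₂ => ?_
    rw [mem_incidenceFinset] at he₁ he₂
    have he : e = s(w₁, w₂) := (Sym2.mem_and_mem_iff hne).mp ⟨he₁.2, he₂.2⟩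
    rw [mem_coe, mem_neighborFinset] at h₁ h₂
    exact hG {u, w₁, w₂} (is3Clique_triple_iff.mpr ⟨h₁, h₂, by simpa [he] using he₁.1⟩)

theorem biUnion_incidenceFinset_subset_edgeFinset (s : Finset V) :
    s.biUnion (fun w => G.incidenceFinset w) ⊆ G.edgeFinset :=
  biUnion_subset.mpr fun w _ => G.incidenceFinset_subset w

theorem sum_degree_neighborFinset_le (hG : G.CliqueFree 3) (u : V) :
    ∑ w ∈ G.neighborFinset u, G.degree w ≤ #G.edgeFinset := by
  rw [← card_biUnion_incidenceFinset_neighborFinset hG]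
  exact card_le_card (biUnion_incidenceFinset_subset_edgeFinset _)

theorem adj_or_adj_of_sum_degree_neighborFinset_eq (hG : G.CliqueFree 3) {u : V}
    (h : ∑ w ∈ G.neighborFinset u, G.degree w = #G.edgeFinset) {x y : V} (hxy : G.Adj x y) :
    G.Adj u x ∨ G.Adj u y := by
  rw [← card_biUnion_incidenceFinset_neighborFinset hG] at h
  have hxy : s(x, y) ∈ (G.neighborFinset u).biUnion (fun w => G.incidenceFinset w) := by
    rw [eq_of_subset_of_card_le (biUnion_incidenceFinset_subset_edgeFinset _) h.ge]
    exact mem_edgeFinset.mpr hxy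
  obtain ⟨w, huw, hw⟩ := mem_biUnion.mp hxy
  rw [mem_neighborFinset] at huw
  rcases Sym2.mem_iff.mp (G.mem_incidenceFinset w _ |>.mp hw).2 with rfl | rfl
  exacts [Or.inl huw, Or.inr huw]

theorem disjoint_neighborFinset_biUnion_neighborFinset (hG : G.CliqueFree 3) (u : V) :
    Disjoint (G.neighborFinset u) ((G.neighborFinset u).biUnion (fun w => G.neighborFinset w)) := by
  refine Finset.disjoint_left.mpr fun t hut ht => ?_
  obtain ⟨w, huw, hwt⟩ := mem_biUnion.mp ht
  rw [mem_neighborFinset] at hut huw hwt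
  exact hG {u, w, t} (is3Clique_triple_iff.mpr ⟨huw, hut, hwt⟩)

theorem adj_iff_of_forall_adj_or_adj (hG : G.CliqueFree 3) {u : V}
    (hu : ∀ x y, G.Adj x y → G.Adj u x ∨ G.Adj u y)
    (hdist2 : ∀ w t, G.Adj u w → G.Adj w t → ∀ x y, G.Adj x y → G.Adj t x ∨ G.Adj t y)
    (x y : V) :
    G.Adj x y ↔
      (x ∈ G.neighborFinset u ∧ y ∈ (G.neighborFinset u).biUnion (fun w => G.neighborFinset w)) ∨
      (x ∈ (G.neighborFinset u).biUnion (fun w => G.neighborFinset w) ∧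
        y ∈ G.neighborFinset u) := by
  have hST := Finset.disjoint_left.mp (disjoint_neighborFinset_biUnion_neighborFinset hG u)
  simp only [mem_biUnion, mem_neighborFinset] at hST ⊢
  have hcomplete : ∀ s t, G.Adj u s → (∃ w, G.Adj u w ∧ G.Adj w t) → G.Adj s t := by
    rintro s t hus ⟨w, huw, hwt⟩
    rcases hdist2 w t huw hwt u s hus with htu | hts
    · exact absurd ⟨w, huw, hwt⟩ (hST htu.symm)
    · exact hts.symm
  constructor
  · intro hxy
    rcases hu x y hxy with hux | huy
    exacts [Or.inl ⟨hux, x, hux, hxy⟩, Or.inr ⟨⟨y, huy, hxy.symm⟩, huy⟩]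
  · rintro (⟨hx, hy⟩ | ⟨hx, hy⟩)
    exacts [hcomplete x y hx hy, (hcomplete y x hy hx).symm]

variable {v : V → ℝ} {μ : ℝ} {u : V}

omit [DecidableEq V] in
theorem sq_mul_eq_sum_sum_of_mulVec_eq_smul (hv : G.adjMatrix ℝ *ᵥ v = μ • v) (u : V) :
    μ ^ 2 * v u = ∑ w ∈ G.neighborFinset u, ∑ z ∈ G.neighborFinset w, v z := by
  calc μ ^ 2 * v u = (G.adjMatrix ℝ *ᵥ (G.adjMatrix ℝ *ᵥ v)) u := by
        rw [hv, mulVec_smul, hv, smul_smul, sq, Pi.smul_apply, smul_eq_mul]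
    _ = _ := by simp only [adjMatrix_mulVec_apply]

omit [DecidableEq V] in
theorem sum_sum_neighborFinset_le_sum_degree (hmax : ∀ z, |v z| ≤ 1) (u : V) :
    ∑ w ∈ G.neighborFinset u, ∑ z ∈ G.neighborFinset w, v z ≤
      ∑ w ∈ G.neighborFinset u, (G.degree w : ℝ) := by
  refine sum_le_sum fun w _ => ?_
  rw [← card_neighborFinset_eq_degree, ← nsmul_one, ← sum_const]
  exact sum_le_sum fun z _ => (le_abs_self _).trans (hmax z)

theorem eigenvalue_sq_le_card_edgeFinset (hG : G.CliqueFree 3)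
    (hv : G.adjMatrix ℝ *ᵥ v = μ • v) (hmax : ∀ z, |v z| ≤ 1) (hu : v u = 1) :
    μ ^ 2 ≤ #G.edgeFinset :=
  calc μ ^ 2 = ∑ w ∈ G.neighborFinset u, ∑ z ∈ G.neighborFinset w, v z := by
        rw [← sq_mul_eq_sum_sum_of_mulVec_eq_smul hv, hu, mul_one]
    _ ≤ ∑ w ∈ G.neighborFinset u, (G.degree w : ℝ) := sum_sum_neighborFinset_le_sum_degree hmax u
    _ ≤ #G.edgeFinset := by exact_mod_cast sum_degree_neighborFinset_le hG u

theorem sum_degree_eq_and_eq_one_of_eigenvalue_sq_eq (hG : G.CliqueFree 3)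
    (hv : G.adjMatrix ℝ *ᵥ v = μ • v) (hmax : ∀ z, |v z| ≤ 1) (hu : v u = 1)
    (hμ : μ ^ 2 = #G.edgeFinset) :
    ∑ w ∈ G.neighborFinset u, G.degree w = #G.edgeFinset ∧
      ∀ w z, G.Adj u w → G.Adj w z → v z = 1 := by
  have hsum := sq_mul_eq_sum_sum_of_mulVec_eq_smul hv u
  rw [hu, mul_one, hμ] at hsum
  have hle := sum_sum_neighborFinset_le_sum_degree (G := G) hmax u
  have hdeg : (∑ w ∈ G.neighborFinset u, G.degree w : ℝ) ≤ #G.edgeFinset := by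
    exact_mod_cast sum_degree_neighborFinset_le hG u
  refine ⟨by exact_mod_cast le_antisymm hdeg (hsum ▸ hle), fun w z huw hwz => ?_⟩
  have hterm (w) (_ : w ∈ G.neighborFinset u) :
      ∑ z ∈ G.neighborFinset w, v z ≤ ∑ z ∈ G.neighborFinset w, (1 : ℝ) :=
    sum_le_sum fun z _ => (le_abs_self _).trans (hmax z)
  have houter := (sum_eq_sum_iff_of_le hterm).mp <| by
    simp only [sum_const, card_neighborFinset_eq_degree, nsmul_one]
    linarith
  exact (sum_eq_sum_iff_of_le fun z _ => (le_abs_self _).trans (hmax z)).mp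
    (houter w ((mem_neighborFinset ..).mpr huw)) z ((mem_neighborFinset ..).mpr hwz)

theorem exists_iso_disjUnion_of_eigenvalue_sq_eq (hG : G.CliqueFree 3)
    (hv : G.adjMatrix ℝ *ᵥ v = μ • v) (hmax : ∀ z, |v z| ≤ 1) (hu : v u = 1)
    (hμ : μ ^ 2 = #G.edgeFinset) :
    ∃ a b k : ℕ, a * b = #G.edgeFinset ∧
      Nonempty (G ≃g disjUnion (completeBipartiteGraph (Fin a) (Fin b))
        (⊥ : SimpleGraph (Fin k))) := by
  set S := G.neighborFinset u
  set T := S.biUnion (fun w => G.neighborFinset w)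
  obtain ⟨hdeg, hval⟩ := sum_degree_eq_and_eq_one_of_eigenvalue_sq_eq hG hv hmax hu hμ
  -- each vertex at distance two from `u` is again a maximum of `v`
  have hcover (w t : V) (huw : G.Adj u w) (hwt : G.Adj w t) (x y : V) (hxy : G.Adj x y) :
      G.Adj t x ∨ G.Adj t y :=
    adj_or_adj_of_sum_degree_neighborFinset_eq hG
      (sum_degree_eq_and_eq_one_of_eigenvalue_sq_eq hG hv hmax (hval w t huw hwt) hμ).1 hxy
  have hadj := adj_iff_of_forall_adj_or_adj hG
    (fun x y => adj_or_adj_of_sum_degree_neighborFinset_eq hG hdeg) hcover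
  have hST := disjoint_neighborFinset_biUnion_neighborFinset hG u
  refine ⟨#S, #T, #(S ∪ T)ᶜ, ?_, nonempty_iso_disjUnion_of_adj_iff hST hadj⟩
  rw [← hdeg, ← smul_eq_mul, ← sum_const]
  refine sum_congr rfl fun w hw => ?_
  rw [← card_neighborFinset_eq_degree, neighborFinset_eq_of_adj_iff hST hadj hw]

theorem le_sqrt_card_edgeFinset_of_mem_spectrum (hG : G.CliqueFree 3)
    (hμ : μ ∈ spectrum ℝ (adjMat G)) : μ ≤ √(#G.edgeFinset) := by
  obtain ⟨v, u, hv, hu, hmax⟩ := exists_eigenvector_abs_le_one hμ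
  rw [adjMat_eq_adjMatrix] at hv
  exact Real.le_sqrt_of_sq_le (eigenvalue_sq_le_card_edgeFinset hG hv hmax hu)

theorem exists_iso_disjUnion_of_sqrt_mem_spectrum (hG : G.CliqueFree 3)
    (h : √(#G.edgeFinset) ∈ spectrum ℝ (adjMat G)) :
    ∃ a b k : ℕ, a * b = #G.edgeFinset ∧
      Nonempty (G ≃g disjUnion (completeBipartiteGraph (Fin a) (Fin b))
        (⊥ : SimpleGraph (Fin k))) := by
  obtain ⟨v, u, hv, hu, hmax⟩ := exists_eigenvector_abs_le_one h
  rw [adjMat_eq_adjMatrix] at hv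
  exact exists_iso_disjUnion_of_eigenvalue_sq_eq hG hv hmax hu
    (Real.sq_sqrt (Nat.cast_nonneg _))

end SimpleGraph

theorem stmt11 {V : Type} [Fintype V] [DecidableEq V] (G : SimpleGraph V) (m : ℕ)
    (hfree : G.CliqueFree 3) (hGm : G.edgeSet.ncard = m) :
    specRad G ≤ Real.sqrt m ∧
    (specRad G = Real.sqrt m ↔ ∃ a b k : ℕ, a * b = m ∧
      Nonempty (G ≃g disjUnion (completeBipartiteGraph (Fin a) (Fin b))
        (⊥ : SimpleGraph (Fin k)))) := by
  classical
  have hm : G.edgeFinset.card = m := by rw [← hGm, ← coe_edgeFinset, Set.ncard_coe_finset]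
  subst hm
  have hle : specRad G ≤ √G.edgeFinset.card :=
    Real.sSup_le (fun _ => le_sqrt_card_edgeFinset_of_mem_spectrum hfree) (Real.sqrt_nonneg _)
  refine ⟨hle, fun heq => ?_, fun ⟨a, b, k, hab, ⟨e⟩⟩ => hle.antisymm ?_⟩
  · rcases (spectrum ℝ (adjMat G)).eq_empty_or_nonempty with hempty | hne
    -- only for empty `V`, where `specRad G = sSup ∅ = 0`
    · rw [specRad, hempty, Real.sSup_empty, eq_comm, Real.sqrt_eq_zero (Nat.cast_nonneg _),
        Nat.cast_eq_zero, Finset.card_eq_zero] at heq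
      exact ⟨_, _, _, by simp [heq], nonempty_iso_disjUnion_of_adj_iff
        (Finset.disjoint_empty_left ∅) (by simp [edgeFinset_eq_empty.mp heq])⟩
    · exact exists_iso_disjUnion_of_sqrt_mem_spectrum hfree
        (heq ▸ hne.csSup_mem (Matrix.finite_spectrum _))
  · rw [specRad, spectrum_adjMat_congr e, ← specRad, ← hab, Nat.cast_mul]
    simpa using sqrt_card_mul_card_le_specRad (α := Fin a) (β := Fin b) (γ := Fin k)
end
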